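/- arXiv:0812.0715 — 6 statements merged into one kernel-verified Lean document; each statement's English description precedes it below -/
import Mathlib

section
/- Let H be a complex Hilbert space, G a group, and U : G → U(H) a unitary representation (a group homomorphism into the group of unitary operators on H). Let Ω ∈ H be a unit vector with U(g)Ω = Ω for all g ∈ G. Let K₁ and K₂ be closed subspaces of H, each containing Ω and each invariant under U(g) for every g ∈ G. Assume: (i) every x ∈ K₁ satisfying U(g)x = x for all g ∈ G is a scalar multiple of Ω; and (ii) U(g)y = y for all y ∈ K₂ and all g ∈ G. Then for all x ∈ K₁ and y ∈ K₂ one has ⟨x, y⟩ = ⟨x, Ω⟩⟨Ω, y⟩. -/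
/-!
Project a `U`-fixed vector `y ∈ K₂` orthogonally onto `K₁`. Because `K₁` is `U`-invariant, the
projection commutes with every `U g`, so the projection of `y` is again `U`-fixed, hence equal to
`c • Ω` by ergodicity on `K₁`. Pairing with `x ∈ K₁` only sees this projection, and pairing with
`Ω` identifies `c = ⟪Ω, y⟫`.
-/

open scoped InnerProductSpace

section

variable {𝕜 E : Type*} [RCLike 𝕜] [NormedAddCommGroup E] [InnerProductSpace 𝕜 E]

theorem LinearIsometryEquiv.map_starProjection_of_image_eq (f : E ≃ₗᵢ[𝕜] E)
    {K : Submodule 𝕜 E} [K.HasOrthogonalProjection] (hK : f '' K = K) (x : E) :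
    f (K.starProjection x) = K.starProjection (f x) := by
  have hKf : K.map (f.toLinearEquiv : E →ₗ[𝕜] E) = K := SetLike.coe_injective hK
  have := Submodule.starProjection_map_apply f K (f x)
  simp_rw [hKf, f.symm_apply_apply] at this
  exact this.symm

theorem Submodule.inner_starProjection_right_of_mem (K : Submodule 𝕜 E)
    [K.HasOrthogonalProjection] {x : E} (hx : x ∈ K) (y : E) :
    ⟪x, K.starProjection y⟫_𝕜 = ⟪x, y⟫_𝕜 := by
  rw [← K.inner_starProjection_left_eq_right, K.starProjection_eq_self_iff.mpr hx]

theorem Submodule.inner_eq_inner_mul_inner_of_starProjection_eq_smul (K : Submodule 𝕜 E)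
    [K.HasOrthogonalProjection] {Ω : E} (hΩ : ‖Ω‖ = 1) (hΩK : Ω ∈ K) {y : E} {c : 𝕜}
    (hy : K.starProjection y = c • Ω) {x : E} (hx : x ∈ K) :
    ⟪x, y⟫_𝕜 = ⟪x, Ω⟫_𝕜 * ⟪Ω, y⟫_𝕜 := by
  rw [← K.inner_starProjection_right_of_mem hx, ← K.inner_starProjection_right_of_mem hΩK, hy,
    inner_smul_right, inner_smul_right, inner_self_eq_norm_sq_to_K, hΩ]
  simp [mul_comm]

end

theorem free_joinings_stmt0_general
    {H : Type*} [NormedAddCommGroup H] [InnerProductSpace ℂ H] [CompleteSpace H]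
    {G : Type*} [Group G] (U : G →* (H ≃ₗᵢ[ℂ] H))
    (Ω : H) (hΩnorm : ‖Ω‖ = 1)
    (K₁ K₂ : Submodule ℂ H)
    (hK₁closed : IsClosed (K₁ : Set H))
    (hΩK₁ : Ω ∈ K₁)
    (hK₁inv : ∀ g : G, U g '' (K₁ : Set H) = (K₁ : Set H))
    (herg : ∀ x ∈ K₁, (∀ g : G, U g x = x) → ∃ c : ℂ, x = c • Ω)
    (hid : ∀ y ∈ K₂, ∀ g : G, U g y = y) :
    ∀ x ∈ K₁, ∀ y ∈ K₂, ⟪x, y⟫_ℂ = ⟪x, Ω⟫_ℂ * ⟪Ω, y⟫_ℂ := by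
  intro x hx y hy
  have : CompleteSpace K₁ := hK₁closed.completeSpace_coe
  obtain ⟨c, hc⟩ := herg _ (K₁.starProjection_apply_mem y) fun g => by
    rw [(U g).map_starProjection_of_image_eq (hK₁inv g), hid y hy g]
  exact K₁.inner_eq_inner_mul_inner_of_starProjection_eq_smul hΩnorm hΩK₁ hc hx

/-- Hilbert-space core of Theorem 3.3, forward direction.
Let `H` be a complex Hilbert space, `G` a group and `U` a unitary representation of `G`
on `H`. Let `Ω` be a `U`-invariant unit vector, and `K₁`, `K₂` closed `U`-invariant
subspaces containing `Ω`. If the only `U`-fixed vectors in `K₁` are the scalar multiples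
of `Ω`, and every vector of `K₂` is `U`-fixed, then `⟪x, y⟫ = ⟪x, Ω⟫ * ⟪Ω, y⟫` for all
`x ∈ K₁`, `y ∈ K₂`. -/
theorem free_joinings_stmt0
    {H : Type*} [NormedAddCommGroup H] [InnerProductSpace ℂ H] [CompleteSpace H]
    {G : Type*} [Group G] (U : G →* (H ≃ₗᵢ[ℂ] H))
    (Ω : H) (hΩnorm : ‖Ω‖ = 1) (hΩfix : ∀ g : G, U g Ω = Ω)
    (K₁ K₂ : Submodule ℂ H)
    (hK₁closed : IsClosed (K₁ : Set H)) (hK₂closed : IsClosed (K₂ : Set H))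
    (hΩK₁ : Ω ∈ K₁) (hΩK₂ : Ω ∈ K₂)
    (hK₁inv : ∀ g : G, U g '' (K₁ : Set H) = (K₁ : Set H))
    (hK₂inv : ∀ g : G, U g '' (K₂ : Set H) = (K₂ : Set H))
    (herg : ∀ x ∈ K₁, (∀ g : G, U g x = x) → ∃ c : ℂ, x = c • Ω)
    (hid : ∀ y ∈ K₂, ∀ g : G, U g y = y) :
    ∀ x ∈ K₁, ∀ y ∈ K₂, ⟪x, y⟫_ℂ = ⟪x, Ω⟫_ℂ * ⟪Ω, y⟫_ℂ :=
  free_joinings_stmt0_general U Ω hΩnorm K₁ K₂ hK₁closed hΩK₁ hK₁inv herg hid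
end

section
/- Let X be a set, σ : X ≃ X a bijection, and x₀ ∈ X a point with σ(x₀) = x₀. Then the set {f ∈ ℓ²(X;ℂ) : f ∘ σ = f} of fixed vectors of the unitary operator on ℓ²(X;ℂ) induced by σ equals the ℂ-linear span of δ_{x₀} if and only if for every x ∈ X with x ≠ x₀ the orbit {σⁿ(x) : n ∈ ℤ} is infinite. -/
open scoped ENNReal

/-!
A vector fixed by `f ↦ f ∘ σ` is constant on every `σ`-orbit, while an `ℓ²` vector has only
finitely many coordinates of norm above any positive threshold; so it vanishes on every infinite
orbit, and if all orbits other than `{x₀}` are infinite it is a multiple of `δ_{x₀}`. Conversely,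
the indicator of a finite orbit through `x ≠ x₀` is a fixed vector outside the span of `δ_{x₀}`.
-/

theorem Equiv.Perm.SameCycle.eq_of_comp_eq {α β : Type*} {f : Equiv.Perm α} {g : α → β}
    (hg : g ∘ f = g) {x y : α} (h : f.SameCycle x y) : g x = g y := by
  obtain ⟨n, rfl⟩ := h
  have step : ∀ m : ℤ, g ((f ^ (1 + m)) x) = g ((f ^ m) x) := fun m => by
    rw [zpow_one_add, Perm.mul_apply]
    exact congrFun hg _
  induction n using Int.induction_on with
  | zero => rfl
  | succ k ih => rw [ih, add_comm, step]
  | pred k ih => rw [ih, ← step (-k - 1), add_sub_cancel]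

section lp

variable {α : Type*}

theorem Memℓp.finite_setOf_le_norm {E : α → Type*} [∀ i, NormedAddCommGroup (E i)]
    {p : ℝ≥0∞} {f : ∀ i, E i} (hf : Memℓp f p) (hp : p ≠ ∞) {ε : ℝ} (hε : 0 < ε) :
    {i | ε ≤ ‖f i‖}.Finite := by
  rcases eq_or_ne p 0 with rfl | hp₀
  · exact hf.finite_dsupport.subset fun i hi => norm_pos_iff.mp (hε.trans_le hi)
  have hp' : 0 < p.toReal := ENNReal.toReal_pos hp₀ hp
  have hsmall : ∀ᶠ i in Filter.cofinite, ‖f i‖ ^ p.toReal < ε ^ p.toReal :=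
    (hf.summable hp').tendsto_cofinite_zero.eventually_lt_const (by positivity)
  exact (Filter.eventually_cofinite.mp hsmall).subset fun i hi =>
    not_lt.mpr (Real.rpow_le_rpow hε.le hi hp'.le)

theorem Memℓp.eq_zero_of_infinite_setOf_eq {E : Type*} [NormedAddCommGroup E] {p : ℝ≥0∞}
    {f : α → E} (hf : Memℓp f p) (hp : p ≠ ∞) {i : α} (h : {j | f j = f i}.Infinite) :
    f i = 0 := by
  by_contra hi
  exact h ((hf.finite_setOf_le_norm hp (norm_pos_iff.mpr hi)).subset
    fun j (hj : f j = f i) => (congrArg (‖·‖) hj.symm).le)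

theorem Set.Finite.memℓp_indicator {E : Type*} [NormedAddCommGroup E] {s : Set α}
    (hs : s.Finite) (c : α → E) (p : ℝ≥0∞) : Memℓp (s.indicator c) p :=
  (memℓp_zero (hs.subset Set.support_indicator_subset)).of_exponent_ge bot_le

variable [DecidableEq α] {𝕜 : Type*} [NormedField 𝕜] {p : ℝ≥0∞}

theorem lp.mem_span_single_one_iff {i : α} {g : lp (fun _ : α => 𝕜) p} :
    g ∈ Submodule.span 𝕜 {lp.single p i (1 : 𝕜)} ↔ ∀ j ≠ i, g j = 0 := by
  rw [Submodule.mem_span_singleton]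
  constructor
  · rintro ⟨a, rfl⟩ j hj
    rw [lp.coeFn_smul, Pi.smul_apply, lp.single_apply_ne p i _ hj, smul_zero]
  · refine fun hg => ⟨g i, lp.ext (funext fun j => ?_)⟩
    rcases eq_or_ne j i with rfl | hj
    · simp
    · rw [lp.coeFn_smul, Pi.smul_apply, lp.single_apply_ne p i _ hj, smul_zero, hg j hj]

end lp

/-- ergodicity criterion for group systems, Section 3. For a bijection
`σ` of a set `X` fixing a point `x₀`, the set of fixed vectors of the unitary operator
`f ↦ f ∘ σ` on `ℓ²(X;ℂ)` equals the `ℂ`-linear span of `δ_{x₀}` if and only if the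
orbit `{σⁿ x : n ∈ ℤ}` of every `x ≠ x₀` is infinite. -/
theorem free_joinings_stmt3
    {X : Type*} [DecidableEq X] (σ : X ≃ X) (x₀ : X) (hfix : σ x₀ = x₀) :
    {f : lp (fun _ : X => ℂ) 2 | (fun x => f (σ x)) = (fun x => f x)} =
      ↑(Submodule.span ℂ ({lp.single 2 x₀ (1 : ℂ)} :
        Set (lp (fun _ : X => ℂ) 2))) ↔
    ∀ x : X, x ≠ x₀ → (Set.range fun n : ℤ => (σ ^ n) x).Infinite := by
  constructor
  · intro h x hx hfin
    let S : Set X := {y | Equiv.Perm.SameCycle σ x y}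
    let g : lp (fun _ : X => ℂ) 2 := ⟨S.indicator 1, hfin.memℓp_indicator 1 2⟩
    have hg : g ∈ {f : lp (fun _ : X => ℂ) 2 | (fun x => f (σ x)) = (fun x => f x)} := by
      funext y
      change S.indicator 1 (σ y) = S.indicator 1 y
      have hS : σ y ∈ S ↔ y ∈ S := Equiv.Perm.sameCycle_apply_right
      by_cases hy : y ∈ S <;> simp [hy, hS]
    rw [h, SetLike.mem_coe, lp.mem_span_single_one_iff] at hg
    have hxS : x ∈ S := Equiv.Perm.SameCycle.rfl
    simpa [g, hxS] using hg x hx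
  · intro h
    ext f
    rw [SetLike.mem_coe, lp.mem_span_single_one_iff, Set.mem_ofPred_eq]
    constructor
    · intro hf y hy
      exact (lp.memℓp f).eq_zero_of_infinite_setOf_eq ENNReal.ofNat_ne_top
        ((h y hy).mono fun z hz => (Equiv.Perm.SameCycle.eq_of_comp_eq hf hz).symm)
    · intro hf
      funext y
      rcases eq_or_ne y x₀ with rfl | hy
      · rw [hfix]
      · rw [hf y hy, hf (σ y) (hfix ▸ σ.injective.ne hy)]
end

section
/- Let S be a set, e : S ≃ S a bijection, and let T be the automorphism of the free group FreeGroup S induced by e (i.e. T = FreeGroup.freeGroupCongr e, determined by T(of s) = of(e s)). Then every orbit {eⁿ(s) : n ∈ ℤ} (s ∈ S) of e on S is infinite if and only if every orbit {Tⁿ(g) : n ∈ ℤ} of T is infinite for every g ∈ FreeGroup S with g ≠ 1. -/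
open Function

/-- Finite ℤ-orbit of a permutation iff the point is periodic. -/
lemma perm_orbit_finite_iff {α : Type*} (f : Equiv.Perm α) (x : α) :
    (Set.range fun n : ℤ => (f ^ n) x).Finite ↔ ∃ k : ℤ, k ≠ 0 ∧ (f ^ k) x = x := by
  constructor
  · intro hfin
    have hni : ¬ Function.Injective (fun n : ℤ => (f ^ n) x) := by
      intro hinj
      exact (Set.infinite_range_of_injective hinj) hfin
    rw [Function.not_injective_iff] at hni
    obtain ⟨a, b, hab, hne⟩ := hni
    refine ⟨a - b, sub_ne_zero.mpr hne, ?_⟩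
    have : (f ^ (a - b)) x = (f ^ (-b)) ((f ^ a) x) := by
      rw [sub_eq_neg_add, zpow_add, Equiv.Perm.mul_apply]
    rw [this, hab, ← Equiv.Perm.mul_apply, ← zpow_add, neg_add_cancel, zpow_zero,
      Equiv.Perm.one_apply]
  · rintro ⟨k, hk0, hk⟩
    have hK : ((f ^ |k|) x) = x := by
      rcases abs_choice k with h | h
      · rw [h]; exact hk
      · rw [h, zpow_neg]
        exact Equiv.Perm.inv_eq_iff_eq.mpr hk.symm
    have hKpos : 0 < |k| := abs_pos.mpr hk0
    have hfix : Function.IsFixedPt (⇑(f ^ |k|)) x := hK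
    apply Set.Finite.subset (Set.Finite.image (fun m : ℤ => (f ^ m) x)
      (Set.finite_Ico 0 |k|))
    rintro _ ⟨n, rfl⟩
    refine ⟨n % |k|, Set.mem_Ico.mpr ⟨Int.emod_nonneg n hKpos.ne', Int.emod_lt_of_pos n hKpos⟩, ?_⟩
    have hx : ((f ^ (|k| * (n / |k|))) x) = x := by
      rw [zpow_mul]; exact hfix.perm_zpow _
    calc (f ^ (n % |k|)) x = (f ^ (n % |k|)) ((f ^ (|k| * (n / |k|))) x) := by rw [hx]
      _ = (f ^ (n % |k| + |k| * (n / |k|))) x := by rw [zpow_add, Equiv.Perm.mul_apply]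
      _ = (f ^ n) x := by rw [Int.emod_add_mul_ediv]

/-- `freeGroupCongr` as a monoid hom from permutations of `S` to `MulAut (FreeGroup S)`. -/
def freeGroupCongrHom (S : Type*) : Equiv.Perm S →* MulAut (FreeGroup S) where
  toFun f := FreeGroup.freeGroupCongr f
  map_one' := by
    ext x
    simp [FreeGroup.map.id']
  map_mul' f g := by
    ext x
    show FreeGroup.map ⇑(f * g) x = FreeGroup.map ⇑f (FreeGroup.map ⇑g x)
    rw [FreeGroup.map.comp]
    rfl

lemma reduce_map_inj {α β : Type*} [DecidableEq α] [DecidableEq β] {f : α → β}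
    (hf : Function.Injective f) (L : List (α × Bool)) :
    FreeGroup.reduce (L.map fun x => (f x.1, x.2)) =
      (FreeGroup.reduce L).map fun x => (f x.1, x.2) := by
  induction L with
  | nil => rfl
  | cons hd tl ih =>
    rw [List.map_cons, FreeGroup.reduce.cons, FreeGroup.reduce.cons, ih]
    cases h : FreeGroup.reduce tl with
    | nil => rfl
    | cons hd2 tl2 =>
      simp only [List.map_cons]
      by_cases hc : hd.1 = hd2.1 ∧ hd.2 = !hd2.2
      · rw [if_pos hc, if_pos ⟨congrArg f hc.1, hc.2⟩]
      · rw [if_neg hc, if_neg (by simpa [hf.eq_iff] using hc), List.map_cons, List.map_cons]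

lemma toWord_map_inj {α β : Type*} [DecidableEq α] [DecidableEq β] {f : α → β}
    (hf : Function.Injective f) (g : FreeGroup α) :
    (FreeGroup.map f g).toWord = g.toWord.map fun x => (f x.1, x.2) := by
  conv_lhs => rw [← FreeGroup.mk_toWord (x := g)]
  rw [FreeGroup.map.mk, FreeGroup.toWord_mk, reduce_map_inj hf, FreeGroup.reduce_toWord]

/-- Section 3. Let `e : S ≃ S` be a bijection of the alphabet `S` and
`T = FreeGroup.freeGroupCongr e` the induced automorphism of the free group on `S`. Then
every orbit of `e` on `S` is infinite if and only if every orbit of `T` on a nontrivial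
element of `FreeGroup S` is infinite. -/
theorem free_joinings_stmt4 {S : Type*} (e : S ≃ S) :
    (∀ s : S, (Set.range fun n : ℤ => (e ^ n) s).Infinite) ↔
    (∀ g : FreeGroup S, g ≠ 1 →
      (Set.range fun n : ℤ => ((FreeGroup.freeGroupCongr e ^ n :
        FreeGroup S ≃* FreeGroup S) g)).Infinite) := by
  classical
  set P : Equiv.Perm (FreeGroup S) :=
    MulAut.toPerm (FreeGroup S) (freeGroupCongrHom S e) with hP
  have hpow : ∀ (n : ℤ) (g : FreeGroup S),
      ((FreeGroup.freeGroupCongr e ^ n : FreeGroup S ≃* FreeGroup S) g) = (P ^ n) g := by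
    intro n g
    rw [hP, ← map_zpow (MulAut.toPerm (FreeGroup S))]
    rfl
  have hpow2 : ∀ (k : ℤ) (g : FreeGroup S), (P ^ k) g = FreeGroup.map (⇑(e ^ k)) g := by
    intro k g
    rw [hP, ← map_zpow (MulAut.toPerm (FreeGroup S)), ← map_zpow (freeGroupCongrHom S)]
    rfl
  constructor
  · intro h g hg
    by_contra hfin
    rw [Set.not_infinite] at hfin
    have hfin' : (Set.range fun n : ℤ => (P ^ n) g).Finite := by
      apply Set.Finite.subset hfin
      rintro _ ⟨n, rfl⟩
      exact ⟨n, hpow n g⟩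
    obtain ⟨k, hk0, hk⟩ := (perm_orbit_finite_iff P g).mp hfin'
    rw [hpow2] at hk
    have hw := congrArg FreeGroup.toWord hk
    rw [toWord_map_inj (e ^ k).injective] at hw
    cases hL : g.toWord with
    | nil => exact hg (FreeGroup.toWord_eq_nil_iff.mp hL)
    | cons a L =>
      rw [hL, List.map_cons] at hw
      have ha : (e ^ k) a.1 = a.1 := congrArg Prod.fst (List.head_eq_of_cons_eq hw)
      exact (h a.1) ((perm_orbit_finite_iff e a.1).mpr ⟨k, hk0, ha⟩)
  · intro h s
    by_contra hfin
    rw [Set.not_infinite] at hfin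
    obtain ⟨k, hk0, hk⟩ := (perm_orbit_finite_iff e s).mp hfin
    have hg : (FreeGroup.of s : FreeGroup S) ≠ 1 := by
      intro hc
      simpa [FreeGroup.toWord_of] using congrArg FreeGroup.toWord hc
    have hfix : (P ^ k) (FreeGroup.of s) = FreeGroup.of s := by
      rw [hpow2, FreeGroup.map.of, hk]
    have hfin2 : (Set.range fun n : ℤ => ((FreeGroup.freeGroupCongr e ^ n :
        FreeGroup S ≃* FreeGroup S) (FreeGroup.of s))).Finite := by
      apply Set.Finite.subset ((perm_orbit_finite_iff P (FreeGroup.of s)).mpr ⟨k, hk0, hfix⟩)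
      rintro _ ⟨n, rfl⟩
      exact ⟨n, (hpow n _).symm⟩
    exact (h (FreeGroup.of s) hg) hfin2
end

section
/- Let S be a set and e : S ≃ S a bijection with the orbit {eⁿ(s) : n ∈ ℤ} of every s ∈ S infinite, and let T = FreeGroup.freeGroupCongr e be the induced automorphism of Γ = FreeGroup S. Let k, m ≥ 1, let ι : {1,…,m} → {1,…,k} satisfy ι(j) ≠ ι(j+1) for 1 ≤ j < m, and let g₁, …, g_m ∈ Γ all be ≠ 1. Then there exists N ∈ ℕ such that for every n : {1,…,k} → ℤ with |n(i) − n(j)| ≥ N for all i ≠ j, one has T^{n(ι(1))}(g₁) · T^{n(ι(2))}(g₂) ⋯ T^{n(ι(m))}(g_m) ≠ 1 in Γ. -/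
/-!
Only finitely many generators occur in the `g j`; call this set `F`. Since the orbits of `e` are
infinite, `e ^ d` maps a point of `F` into `F` for only finitely many `d : ℤ`. So once the `n i`
are pairwise far apart, the sets `e ^ n i '' F` are pairwise disjoint, while `T ^ n (ι j) (g j)`
lies in the subgroup generated by `e ^ n (ι j) '' F`. Colouring each generator by the set that
contains it maps `FreeGroup S` to a free product of copies of itself and takes the alternating
product to a nonempty reduced word, so the product is not `1`.
-/

open Function Monoid

theorem Equiv.Perm.injective_zpow_apply_of_infinite_range {S : Type*} {e : Equiv.Perm S}
    {s : S} (h : (Set.range fun n : ℤ => (e ^ n) s).Infinite) :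
    Injective fun n : ℤ => (e ^ n) s := by
  intro a b (hab : (e ^ a) s = (e ^ b) s)
  by_contra hne
  wlog hlt : b < a generalizing a b
  · exact this hab.symm (Ne.symm hne) (lt_of_le_of_ne (not_lt.1 hlt) hne)
  have hper : Periodic (fun n : ℤ => (e ^ n) s) (a - b) := fun n => by
    change (e ^ (n + (a - b))) s = (e ^ n) s
    rw [show n + (a - b) = n - b + a by ring, zpow_add, Perm.mul_apply, hab, ← Perm.mul_apply,
      ← zpow_add, sub_add_cancel]
  exact h (hper.image_Ioc (sub_pos.2 hlt) 0 ▸ (Set.finite_Ioc _ _).image _)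

theorem Equiv.Perm.exists_disjoint_zpow_image {S : Type*} {e : Equiv.Perm S} {F : Set S}
    (hF : F.Finite) (he : ∀ s ∈ F, Injective fun n : ℤ => (e ^ n) s) :
    ∃ N : ℕ, ∀ a b : ℤ, (N : ℤ) ≤ |a - b| →
      _root_.Disjoint ((e ^ a) '' F) ((e ^ b) '' F) := by
  set D : Set ℤ := {d | ∃ s ∈ F, (e ^ d) s ∈ F}
  have hD : D.Finite := by
    have hfin : (⋃ s ∈ F, ⋃ t ∈ F, (fun n : ℤ => (e ^ n) s) ⁻¹' {t}).Finite :=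
      hF.biUnion fun s hs => hF.biUnion fun t _ =>
        (Set.subsingleton_singleton.preimage (he s hs)).finite
    refine hfin.subset ?_
    rintro d ⟨s, hs, hds⟩
    exact Set.mem_biUnion hs (Set.mem_biUnion hds rfl)
  obtain ⟨B, hB⟩ := (hD.image Int.natAbs).bddAbove
  refine ⟨B + 1, fun a b hab => Set.disjoint_left.2 ?_⟩
  rintro _ ⟨s, hs, rfl⟩ ⟨t, ht, hts⟩
  have hd : a - b ∈ D := ⟨s, hs, by
    rwa [sub_eq_neg_add, zpow_add, Perm.mul_apply, ← hts, ← Perm.mul_apply, ← zpow_add,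
      neg_add_cancel, zpow_zero, Perm.one_apply]⟩
  have hdB := hB ⟨_, hd, rfl⟩
  rw [Int.abs_eq_natAbs] at hab
  omega

theorem exists_forall_mem_apply_eq_of_pairwise_disjoint {S κ : Type*} [Nonempty κ]
    {A : κ → Set S} (hA : Pairwise (Disjoint on A)) :
    ∃ c : S → κ, ∀ i, ∀ s ∈ A i, c s = i := by
  classical
  refine ⟨fun s => if hs : ∃ i, s ∈ A i then hs.choose else Classical.arbitrary κ,
    fun i s hs => ?_⟩
  have hex : ∃ i, s ∈ A i := ⟨i, hs⟩
  dsimp only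
  rw [dif_pos hex]
  by_contra hne
  exact Set.disjoint_left.1 (hA hne) hex.choose_spec hs

namespace FreeGroup

variable {α β : Type*}

def freeGroupCongrHom : Equiv.Perm α →* MulAut (FreeGroup α) where
  toFun := freeGroupCongr
  map_one' := freeGroupCongr_refl
  map_mul' e f := (freeGroupCongr_trans f e).symm

theorem freeGroupCongr_zpow (e : Equiv.Perm α) (n : ℤ) :
    freeGroupCongr e ^ n = freeGroupCongr (e ^ n) :=
  (map_zpow freeGroupCongrHom e n).symm

theorem mk_mem_closure (L : List (α × Bool)) :
    mk L ∈ Subgroup.closure (of '' (Prod.fst '' {p | p ∈ L})) := by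
  rw [← lift_of_apply (mk L), lift_mk]
  refine Subgroup.list_prod_mem _ fun x hx => ?_
  obtain ⟨⟨a, b⟩, hab, rfl⟩ := List.mem_map.1 hx
  have ha : of a ∈ Subgroup.closure (of '' (Prod.fst '' {p | p ∈ L})) :=
    Subgroup.subset_closure ⟨a, ⟨_, hab, rfl⟩, rfl⟩
  cases b
  · exact Subgroup.inv_mem _ ha
  · exact ha

theorem map_mem_closure_image {f : α → β} {A : Set α} {x : FreeGroup α}
    (hx : x ∈ Subgroup.closure (of '' A)) : map f x ∈ Subgroup.closure (of '' (f '' A)) := by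
  have := Subgroup.mem_map_of_mem (map f) hx
  rw [MonoidHom.map_closure] at this
  simpa only [Set.image_image, map.of] using this

theorem prod_ofFn_ne_one_of_pairwise_disjoint {κ : Type*} {A : κ → Set α}
    (hA : Pairwise (Disjoint on A)) {m : ℕ} (hm : 1 ≤ m) {ι : Fin m → κ}
    (hι : ∀ j : Fin m, (h : (j : ℕ) + 1 < m) → ι j ≠ ι ⟨(j : ℕ) + 1, h⟩)
    {x : Fin m → FreeGroup α} (hx1 : ∀ j, x j ≠ 1)
    (hx : ∀ j, x j ∈ Subgroup.closure (of '' A (ι j))) :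
    (List.ofFn x).prod ≠ 1 := by
  classical
  have : Nonempty κ := ⟨ι ⟨0, hm⟩⟩
  obtain ⟨c, hc⟩ := exists_forall_mem_apply_eq_of_pairwise_disjoint hA
  let φ : FreeGroup α →* CoprodI fun _ : κ => FreeGroup α :=
    lift fun s => CoprodI.of (i := c s) (of s)
  have hφ (j : Fin m) :
      φ (x j) = CoprodI.of (M := fun _ : κ => FreeGroup α) (i := ι j) (x j) :=
    MonoidHom.eqOn_closure (by rintro _ ⟨s, hs, rfl⟩; simp [φ, hc _ s hs]) (hx j)
  let w : CoprodI.Word fun _ : κ => FreeGroup α :=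
    { toList := List.ofFn fun j => ⟨ι j, x j⟩
      ne_one := by
        simp only [List.mem_ofFn, forall_exists_index]
        rintro _ j rfl
        exact hx1 j
      chain_ne := by
        rw [List.isChain_iff_getElem]
        intro i hi
        simp only [List.length_ofFn] at hi
        simpa using hι ⟨i, by omega⟩ hi }
  have hw : φ (List.ofFn x).prod = w.prod := by
    simp [CoprodI.Word.prod, w, map_list_prod, List.map_ofFn, Function.comp_def, hφ]
  intro h
  have hempty : w = CoprodI.Word.empty :=
    CoprodI.Word.equiv.symm.injective (by simp [CoprodI.Word.equiv, ← hw, h])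
  have hlen := congrArg (fun w => w.toList.length) hempty
  simp [w, CoprodI.Word.empty] at hlen
  omega

end FreeGroup

theorem free_joinings_stmt7_general
    {S : Type*} (e : S ≃ S)
    (horb : ∀ s : S, (Set.range fun n : ℤ => (e ^ n) s).Infinite)
    (k m : ℕ) (hm : 1 ≤ m)
    (ι : Fin m → Fin k)
    (hι : ∀ j : Fin m, (h : (j : ℕ) + 1 < m) → ι j ≠ ι ⟨(j : ℕ) + 1, h⟩)
    (g : Fin m → FreeGroup S) (hg : ∀ j, g j ≠ 1) :
    ∃ N : ℕ, ∀ n : Fin k → ℤ, (∀ i j, i ≠ j → (N : ℤ) ≤ |n i - n j|) →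
      (List.ofFn fun j =>
        ((FreeGroup.freeGroupCongr e ^ n (ι j) :
          FreeGroup S ≃* FreeGroup S) (g j))).prod ≠ 1 := by
  classical
  set F : Set S := ⋃ j, Prod.fst '' {p | p ∈ (g j).toWord}
  have hF : F.Finite := Set.finite_iUnion fun j => (g j).toWord.finite_toSet.image _
  have hgF (j : Fin m) : g j ∈ Subgroup.closure (FreeGroup.of '' F) :=
    Subgroup.closure_mono (Set.image_mono (Set.subset_iUnion_of_subset j subset_rfl))
      (by simpa only [FreeGroup.mk_toWord] using FreeGroup.mk_mem_closure (g j).toWord)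
  obtain ⟨N, hN⟩ := Equiv.Perm.exists_disjoint_zpow_image hF fun s _ =>
    Equiv.Perm.injective_zpow_apply_of_infinite_range (horb s)
  refine ⟨N, fun n hn => FreeGroup.prod_ofFn_ne_one_of_pairwise_disjoint
    (A := fun i => (e ^ n i) '' F) (fun i j hij => hN _ _ (hn i j hij)) hm hι
    (fun j => ?_) (fun j => ?_)⟩
  · exact (MulEquiv.map_ne_one_iff _).2 (hg j)
  · rw [FreeGroup.freeGroupCongr_zpow, FreeGroup.freeGroupCongr_apply]
    exact FreeGroup.map_mem_closure_image (hgF j)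

/-- key combinatorial step of Theorem 4.1. Let `e : S ≃ S` have all
orbits infinite and `T = FreeGroup.freeGroupCongr e`. For nontrivial
`g 0, …, g (m-1) ∈ FreeGroup S` and indices `ι : Fin m → Fin k` with consecutive values
distinct, there is `N` such that whenever `|n i − n j| ≥ N` for all `i ≠ j`, the
alternating product `T^{n (ι 0)}(g 0) ⋯ T^{n (ι (m-1))}(g (m-1))` is nontrivial. -/
theorem free_joinings_stmt7
    {S : Type*} (e : S ≃ S)
    (horb : ∀ s : S, (Set.range fun n : ℤ => (e ^ n) s).Infinite)
    (k m : ℕ) (hk : 1 ≤ k) (hm : 1 ≤ m)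
    (ι : Fin m → Fin k)
    (hι : ∀ j : Fin m, (h : (j : ℕ) + 1 < m) → ι j ≠ ι ⟨(j : ℕ) + 1, h⟩)
    (g : Fin m → FreeGroup S) (hg : ∀ j, g j ≠ 1) :
    ∃ N : ℕ, ∀ n : Fin k → ℤ, (∀ i j, i ≠ j → (N : ℤ) ≤ |n i - n j|) →
      (List.ofFn fun j =>
        ((FreeGroup.freeGroupCongr e ^ n (ι j) :
          FreeGroup S ≃* FreeGroup S) (g j))).prod ≠ 1 :=
  free_joinings_stmt7_general e horb k m hm ι hι g hg
end

section
/- Let S be a set and e : S ≃ S a bijection with the orbit {eⁿ(s) : n ∈ ℤ} of every s ∈ S infinite, let T = FreeGroup.freeGroupCongr e be the induced automorphism of Γ = FreeGroup S, and let k ≥ 1. For finitely supported functions c₁, …, c_k : Γ → ℂ there exists N ∈ ℕ such that for every n : {1,…,k} → ℤ with |n(i) − n(j)| ≥ N for all i ≠ j, the continuous linear operators B_i := Σ_{g ∈ supp c_i} c_i(g) · λ(T^{n(i)}(g)) on ℓ²(Γ;ℂ) satisfy ⟨δ₁, B₁B₂⋯B_k δ₁⟩ = c₁(1) · c₂(1)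 ⋯ c_k(1). -/
open scoped ENNReal InnerProductSpace

noncomputable section

private theorem translMem {X : Type*} (e : X ≃ X) (f : lp (fun _ : X => ℂ) 2) :
    Memℓp (fun x => f (e x)) 2 := by
  apply memℓp_gen
  exact (Equiv.summable_iff e (f := fun i => ‖f i‖ ^ (2 : ℝ≥0∞).toReal)).2
    ((lp.memℓp f).summable (by norm_num))

/-- The linear isometry equivalence `f ↦ f ∘ e` of `ℓ²(X;ℂ)` induced by a bijection
`e` of `X`. -/
def translIso {X : Type*} (e : X ≃ X) :
    lp (fun _ : X => ℂ) 2 ≃ₗᵢ[ℂ] lp (fun _ : X => ℂ) 2 where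
  toFun f := ⟨fun x => f (e x), translMem e f⟩
  invFun f := ⟨fun x => f (e.symm x), translMem e.symm f⟩
  map_add' f g := by ext x; simp [lp.coeFn_add]; rfl
  map_smul' c f := by ext x; simp [lp.coeFn_smul]
  left_inv f := by ext x; simp
  right_inv f := by ext x; simp
  norm_map' f := by
    rw [lp.norm_eq_tsum_rpow (by norm_num), lp.norm_eq_tsum_rpow (by norm_num)]
    congr 1
    exact e.tsum_eq (f := fun x => ‖f x‖ ^ (2 : ℝ≥0∞).toReal)

/-- The left translation `λ(g)` on `ℓ²(Γ;ℂ)`, given by `(λ(g) f)(x) = f (g⁻¹ * x)`,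
as a continuous linear operator. -/
def leftTransl {Γ : Type*} [Group Γ] (g : Γ) :
    lp (fun _ : Γ => ℂ) 2 →L[ℂ] lp (fun _ : Γ => ℂ) 2 :=
  (translIso (Equiv.mulLeft g⁻¹)).toLinearIsometry.toContinuousLinearMap

/-!
All letters occurring in the supports of the `c i` form a finite set `A`. Since every `e`-orbit
is infinite, `eᵐ A` and `A` are disjoint once `|m|` is large, so for well-separated exponents the
translates `Tⁿⁱ g`, `g ∈ supp (c i)`, are words over pairwise disjoint alphabets `eⁿⁱ A`.
Through the left regular representation, `⟪δ₁, B₁ ⋯ B_k δ₁⟫` is the coefficient at `1` of the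
product of the translated elements of `ℂ[Γ]`. The retraction of `Γ` onto the free factor
generated by the first alphabet fixes the first factor and kills the rest, so a product
`g₁ g'` of support elements can only be `1` if `g₁ = 1`; hence that coefficient factorizes.
-/

namespace Equiv.Perm

variable {S : Type*}

theorem zpow_sub_apply_eq_of_zpow_apply_eq {e : Perm S} {m₁ m₂ : ℤ} {a b : S}
    (h : (e ^ m₁) a = (e ^ m₂) b) : (e ^ (m₁ - m₂)) a = b := by
  rw [sub_eq_neg_add, zpow_add, zpow_neg, mul_apply, h, inv_eq_iff_eq]

theorem injective_zpow_apply_of_infinite {e : Perm S} {s : S}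
    (h : (Set.range fun m : ℤ => (e ^ m) s).Infinite) :
    Function.Injective fun m : ℤ => (e ^ m) s := by
  set p := Function.minimalPeriod (e • ·) s with hp_def
  have hp : p = 0 := by
    by_contra hp
    have hpos : (0 : ℤ) < p := by positivity
    refine h (((Set.finite_Ico 0 (p : ℤ)).image fun m : ℤ => (e ^ m) s).subset ?_)
    rintro _ ⟨m, rfl⟩
    exact ⟨m % p, ⟨Int.emod_nonneg m hpos.ne', Int.emod_lt_of_pos m hpos⟩,
      MulAction.zpow_smul_mod_minimalPeriod e s m⟩
  intro m₁ m₂ hm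
  have hfix : e ^ (m₁ - m₂) • s = s := zpow_sub_apply_eq_of_zpow_apply_eq hm
  rwa [MulAction.zpow_smul_eq_iff_minimalPeriod_dvd, ← hp_def, hp, Nat.cast_zero, zero_dvd_iff,
    sub_eq_zero] at hfix

theorem exists_disjoint_zpow_image_of_le_abs_sub {e : Perm S}
    (horb : ∀ s, (Set.range fun m : ℤ => (e ^ m) s).Infinite) {A : Set S} (hA : A.Finite) :
    ∃ N : ℕ, ∀ m₁ m₂ : ℤ, (N : ℤ) ≤ |m₁ - m₂| →
      _root_.Disjoint ((e ^ m₁) '' A) ((e ^ m₂) '' A) := by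
  set bad := {m : ℤ | ∃ a ∈ A, (e ^ m) a ∈ A}
  have hbad : bad.Finite := by
    have : bad = ⋃ a ∈ A, ⋃ b ∈ A, {m | (e ^ m) a = b} := by ext; simp [bad]
    rw [this]
    exact hA.biUnion fun a _ => hA.biUnion fun b _ => Set.Subsingleton.finite
      fun m₁ h₁ m₂ h₂ => injective_zpow_apply_of_infinite (horb a) (h₁.trans h₂.symm)
  obtain ⟨N, hN⟩ := (hbad.image Int.natAbs).bddAbove
  refine ⟨N + 1, fun m₁ m₂ hm => Set.disjoint_left.mpr ?_⟩
  rintro _ ⟨a, ha, rfl⟩ ⟨b, hb, hba⟩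
  have hmem : m₁ - m₂ ∈ bad := ⟨a, ha, by rwa [zpow_sub_apply_eq_of_zpow_apply_eq hba.symm]⟩
  have := hN ⟨_, hmem, rfl⟩
  rw [Int.abs_eq_natAbs] at hm
  omega

end Equiv.Perm

namespace FreeGroup

open Subgroup

variable {S : Type*}

theorem freeGroupCongr_zpow_s9 (e : Equiv.Perm S) (m : ℤ) :
    (freeGroupCongr e ^ m : MulAut (FreeGroup S)) = freeGroupCongr (e ^ m) :=
  (map_zpow (MonoidHom.mk' (fun e : Equiv.Perm S => (freeGroupCongr e : MulAut (FreeGroup S)))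
    fun e f => (freeGroupCongr_trans f e).symm) e m).symm

theorem freeGroupCongr_mem_closure_of {S' : Type*} (e : S ≃ S') {A : Set S} {g : FreeGroup S}
    (hg : g ∈ closure (of '' A)) : freeGroupCongr e g ∈ closure (of '' (e '' A)) := by
  have := mem_map_of_mem (freeGroupCongr e).toMonoidHom hg
  rw [MonoidHom.map_closure, Set.image_image] at this
  rwa [Set.image_image]

theorem exists_finite_mem_closure_of (g : FreeGroup S) :
    ∃ A : Set S, A.Finite ∧ g ∈ closure (of '' A) := by
  induction g using FreeGroup.induction_on with
  | C1 => exact ⟨∅, Set.finite_empty, one_mem _⟩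
  | of s => exact ⟨{s}, Set.finite_singleton s, subset_closure ⟨s, rfl, rfl⟩⟩
  | inv_of s ih =>
    obtain ⟨A, hA, hs⟩ := ih
    exact ⟨A, hA, inv_mem hs⟩
  | mul g h ihg ihh =>
    obtain ⟨A, hA, hg⟩ := ihg
    obtain ⟨B, hB, hh⟩ := ihh
    exact ⟨A ∪ B, hA.union hB, mul_mem
      (closure_mono (Set.image_mono Set.subset_union_left) hg)
      (closure_mono (Set.image_mono Set.subset_union_right) hh)⟩

theorem exists_finite_forall_mem_closure_of (s : Finset (FreeGroup S)) :
    ∃ A : Set S, A.Finite ∧ ∀ g ∈ s, g ∈ closure (of '' A) := by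
  choose A hA hgA using exists_finite_mem_closure_of (S := S)
  refine ⟨⋃ g ∈ s, A g, s.finite_toSet.biUnion fun g _ => hA g, fun g hg => ?_⟩
  exact closure_mono (Set.image_mono (Set.subset_biUnion_of_mem (u := A) hg)) (hgA g)

theorem lift_mulIndicator_of_eq_self {L : Set S} {g : FreeGroup S}
    (hg : g ∈ closure (of '' L)) : lift (L.mulIndicator of) g = g := by
  refine MonoidHom.eqOn_closure (f := lift (L.mulIndicator of)) (g := MonoidHom.id _) ?_ hg
  rintro _ ⟨s, hs, rfl⟩
  simp [Set.mulIndicator_of_mem hs]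

theorem lift_mulIndicator_of_eq_one {L L' : Set S} (hL : Disjoint L L') {g : FreeGroup S}
    (hg : g ∈ closure (of '' L')) : lift (L.mulIndicator of) g = 1 := by
  refine (closure_le (lift (L.mulIndicator of)).ker).mpr ?_ hg
  rintro _ ⟨s, hs, rfl⟩
  simp [Set.mulIndicator_of_notMem (hL.notMem_of_mem_right hs)]

end FreeGroup

namespace MonoidAlgebra

variable {R G : Type*} [CommSemiring R] [Group G]

theorem coeff_mul_one_of_retraction {x y : R[G]} (π : G →* G)
    (hx : ∀ g ∈ x.coeff.support, π g = g) (hy : ∀ g ∈ y.coeff.support, π g = 1) :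
    (x * y).coeff 1 = x.coeff 1 * y.coeff 1 := by
  rw [coeff_mul_apply_left, Finsupp.sum, Finset.sum_eq_single (1 : G)]
  · simp
  · intro g hg hg1
    -- `π` fixes `g` but kills `g⁻¹`
    suffices y.coeff g⁻¹ = 0 by rw [mul_one, this, mul_zero]
    by_contra hy0
    have := hy _ (Finsupp.mem_support_iff.mpr hy0)
    rw [map_inv, hx g hg, inv_eq_one] at this
    exact hg1 this
  · intro h1
    rw [Finsupp.notMem_support_iff.mp h1, zero_mul]

theorem map_eq_one_of_mem_support_list_prod (π : G →* G) {l : List R[G]}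
    (hl : ∀ x ∈ l, ∀ g ∈ x.coeff.support, π g = 1) :
    ∀ g ∈ l.prod.coeff.support, π g = 1 := by
  classical
  induction l with
  | nil =>
    intro g hg
    rw [List.prod_nil] at hg
    rw [Finset.mem_one.mp (support_coeff_one_subset hg), map_one]
  | cons x l ih =>
    intro g hg
    rw [List.prod_cons] at hg
    obtain ⟨a, ha, b, hb, rfl⟩ := Finset.mem_mul.mp (support_coeff_mul_subset x l.prod hg)
    rw [map_mul, hl x List.mem_cons_self a ha,
      ih (fun y hy => hl y (List.mem_cons_of_mem x hy)) b hb, one_mul]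

theorem coeff_list_prod_ofFn_one {k : ℕ} (x : Fin k → R[G]) (π : Fin k → G →* G)
    (hfix : ∀ i, ∀ g ∈ (x i).coeff.support, π i g = g)
    (hkill : ∀ i j, i ≠ j → ∀ g ∈ (x j).coeff.support, π i g = 1) :
    (List.ofFn x).prod.coeff 1 = ∏ i, (x i).coeff 1 := by
  induction k with
  | zero => simp
  | succ k ih =>
    have htail : ∀ g ∈ (List.ofFn fun i => x i.succ).prod.coeff.support, π 0 g = 1 := by
      refine map_eq_one_of_mem_support_list_prod _ fun y hy => ?_
      obtain ⟨i, rfl⟩ := List.mem_ofFn.mp hy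
      exact hkill 0 i.succ (Fin.succ_ne_zero i).symm
    rw [List.ofFn_succ, List.prod_cons, coeff_mul_one_of_retraction (π 0) (hfix 0) htail,
      ih (fun i => x i.succ) (fun i => π i.succ) (fun i => hfix i.succ)
        (fun i j hij => hkill i.succ j.succ (Fin.succ_injective _ |>.ne hij)),
      Fin.prod_univ_succ]

theorem support_coeff_mapDomainRingEquiv {M N : Type*} [Monoid M] [Monoid N] (T : M ≃* N)
    (x : R[M]) :
    (mapDomainRingEquiv R T x).coeff.support = x.coeff.support.map T.toEquiv.toEmbedding := by
  rw [coeff_mapDomainRingEquiv]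
  rfl

end MonoidAlgebra

section RegularRepresentation

variable {Γ : Type*} [Group Γ]

local notation "ℓ²(" Γ ")" => lp (fun _ : Γ => ℂ) 2

theorem leftTransl_apply (g : Γ) (f : ℓ²(Γ)) (x : Γ) : leftTransl g f x = f (g⁻¹ * x) :=
  rfl

theorem leftTransl_single [DecidableEq Γ] (g x : Γ) (a : ℂ) :
    leftTransl g (lp.single 2 x a) = lp.single 2 (g * x) a := by
  ext y
  simp only [leftTransl_apply, lp.single_apply, Pi.single_apply, inv_mul_eq_iff_eq_mul]

def leftRegular : Γ →* (ℓ²(Γ) →L[ℂ] ℓ²(Γ)) where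
  toFun := leftTransl
  map_one' := by ext f x; simp [leftTransl_apply]
  map_mul' g h := by ext f x; simp [leftTransl_apply, mul_assoc]

def regularRep : MonoidAlgebra ℂ Γ →ₐ[ℂ] (ℓ²(Γ) →L[ℂ] ℓ²(Γ)) :=
  MonoidAlgebra.lift ℂ _ Γ leftRegular

theorem inner_single_one_regularRep [DecidableEq Γ] (x : MonoidAlgebra ℂ Γ) :
    ⟪(lp.single 2 (1 : Γ) (1 : ℂ) : ℓ²(Γ)), regularRep x (lp.single 2 1 1)⟫_ℂ = x.coeff 1 := by
  induction x using MonoidAlgebra.induction_linear with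
  | zero => simp
  | add x y hx hy => simp [hx, hy]
  | single g a =>
    simp [regularRep, leftRegular, leftTransl_single, lp.inner_single_left,
      MonoidAlgebra.coeff_single, Pi.single_apply, Finsupp.single_apply, eq_comm]

theorem regularRep_mapDomainRingEquiv (T : Γ ≃* Γ) (c : Γ →₀ ℂ) :
    regularRep (MonoidAlgebra.mapDomainRingEquiv ℂ T (.ofCoeff c))
      = ∑ g ∈ c.support, c g • leftTransl (T g) := by
  rw [regularRep, MonoidAlgebra.lift_apply, MonoidAlgebra.coeff_mapDomainRingEquiv, Finsupp.sum]
  exact (Finset.sum_map _ _ _).trans (by simp [leftRegular])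

end RegularRepresentation

open Function in
theorem FreeGroup.coeff_list_prod_ofFn_one_of_pairwise_disjoint {R S : Type*} [CommSemiring R]
    {k : ℕ} (x : Fin k → MonoidAlgebra R (FreeGroup S)) (L : Fin k → Set S)
    (hL : Pairwise (Disjoint on L))
    (hx : ∀ i, ∀ g ∈ (x i).coeff.support, g ∈ Subgroup.closure (of '' L i)) :
    (List.ofFn x).prod.coeff 1 = ∏ i, (x i).coeff 1 :=
  MonoidAlgebra.coeff_list_prod_ofFn_one x (fun i => lift ((L i).mulIndicator of))
    (fun i g hg => lift_mulIndicator_of_eq_self (hx i g hg))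
    (fun _ j hij g hg => lift_mulIndicator_of_eq_one (hL hij) (hx j g hg))

theorem free_joinings_stmt9_general
    {S : Type*} [DecidableEq S] (e : S ≃ S)
    (horb : ∀ s : S, (Set.range fun n : ℤ => (e ^ n) s).Infinite)
    (k : ℕ) (c : Fin k → (FreeGroup S →₀ ℂ)) :
    ∃ N : ℕ, ∀ n : Fin k → ℤ, (∀ i j, i ≠ j → (N : ℤ) ≤ |n i - n j|) →
      ⟪(lp.single 2 (1 : FreeGroup S) (1 : ℂ) : lp (fun _ : FreeGroup S => ℂ) 2),
        (List.ofFn fun i =>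
            ∑ g ∈ (c i).support, c i g •
              leftTransl ((FreeGroup.freeGroupCongr e ^ n i :
                FreeGroup S ≃* FreeGroup S) g)).prod
          (lp.single 2 (1 : FreeGroup S) (1 : ℂ))⟫_ℂ
        = ∏ i, c i 1 := by
  obtain ⟨A, hA, hcA⟩ :=
    FreeGroup.exists_finite_forall_mem_closure_of (Finset.univ.biUnion fun i => (c i).support)
  obtain ⟨N, hN⟩ := Equiv.Perm.exists_disjoint_zpow_image_of_le_abs_sub horb hA
  refine ⟨N, fun n hn => ?_⟩
  set T : Fin k → MulAut (FreeGroup S) := fun i => FreeGroup.freeGroupCongr e ^ n i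
  set x := fun i => MonoidAlgebra.mapDomainRingEquiv ℂ (T i) (.ofCoeff (c i))
  have hx : ∀ i, ∀ g ∈ (x i).coeff.support,
      g ∈ Subgroup.closure (FreeGroup.of '' ((e ^ n i) '' A)) := by
    intro i _ hg
    rw [MonoidAlgebra.support_coeff_mapDomainRingEquiv, Finset.mem_map] at hg
    obtain ⟨g, hg, rfl⟩ := hg
    have := FreeGroup.freeGroupCongr_mem_closure_of (e ^ n i)
      (hcA g (Finset.mem_biUnion.mpr ⟨i, Finset.mem_univ i, hg⟩))
    rwa [← FreeGroup.freeGroupCongr_zpow_s9] at this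
  have hB : (List.ofFn fun i => ∑ g ∈ (c i).support, c i g • leftTransl (T i g))
      = (List.ofFn x).map regularRep := by
    rw [List.map_ofFn]
    exact congrArg List.ofFn (funext fun i => (regularRep_mapDomainRingEquiv _ _).symm)
  rw [hB, ← map_list_prod, inner_single_one_regularRep,
    FreeGroup.coeff_list_prod_ofFn_one_of_pairwise_disjoint x _
      (fun i j hij => hN _ _ (hn i j hij)) hx]
  simp [x]

/-- Theorem 4.1: a strongly mixing group system is k-mixing, expressed
on the dense group algebra. Let `e : S ≃ S` have all orbits infinite and
`T = FreeGroup.freeGroupCongr e`. For finitely supported `c 0, …, c (k-1) : Γ → ℂ`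
(`Γ = FreeGroup S`) there is `N` such that whenever `|n i − n j| ≥ N` for all `i ≠ j`,
the operators `B i = Σ_{g ∈ supp (c i)} c i g • λ(T^{n i} g)` on `ℓ²(Γ;ℂ)` satisfy
`⟪δ₁, B 0 ⋯ B (k-1) δ₁⟫ = c 0 1 * ⋯ * c (k-1) 1`. -/
theorem free_joinings_stmt9
    {S : Type*} [DecidableEq S] (e : S ≃ S)
    (horb : ∀ s : S, (Set.range fun n : ℤ => (e ^ n) s).Infinite)
    (k : ℕ) (hk : 1 ≤ k) (c : Fin k → (FreeGroup S →₀ ℂ)) :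
    ∃ N : ℕ, ∀ n : Fin k → ℤ, (∀ i j, i ≠ j → (N : ℤ) ≤ |n i - n j|) →
      ⟪(lp.single 2 (1 : FreeGroup S) (1 : ℂ) : lp (fun _ : FreeGroup S => ℂ) 2),
        (List.ofFn fun i =>
            ∑ g ∈ (c i).support, c i g •
              leftTransl ((FreeGroup.freeGroupCongr e ^ n i :
                FreeGroup S ≃* FreeGroup S) g)).prod
          (lp.single 2 (1 : FreeGroup S) (1 : ℂ))⟫_ℂ
        = ∏ i, c i 1 :=
  free_joinings_stmt9_general e horb k c

end
end

section
/- Let G₁ and G₂ be groups and let φ : G₁ ≃* G₁ be an automorphism of G₁ with φ(g) ≠ g for every g ∈ G₁ with g ≠ 1. Let Φ : G₁ ∗ G₂ →* G₁ ∗ G₂ be the endomorphism of the free product induced by φ on the first factor and the identity on the second factor (i.e. Φ ∘ inl = inl ∘ φ and Φ ∘ inr = inr). Then the fixed-point set {x ∈ G₁ ∗ G₂ : Φ(x) = x} equals the image of the canonical embedding inr : G₂ → G₁ ∗ G₂. -/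
/-!
Letting an endomorphism act letterwise on a reduced word of a free product gives again a
reduced word as long as the letter maps are injective, so by uniqueness of reduced words every
letter of the reduced word of a fixed point is itself fixed. If no nontrivial letter of the
first factor is fixed, such a reduced word only has letters from the second factor; since
adjacent letters come from different factors, it has at most one letter.
-/

open Monoid

namespace Monoid.CoprodI

variable {ι : Type*} {M : ι → Type*} [∀ i, Monoid (M i)]

def Word.map (ψ : ∀ i, M i →* M i) (hψ : ∀ i, Function.Injective (ψ i)) (w : Word M) :
    Word M where
  toList := w.toList.map fun l => ⟨l.1, ψ l.1 l.2⟩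
  ne_one := by
    simp only [List.mem_map]
    rintro _ ⟨l, hl, rfl⟩
    exact fun h => w.ne_one l hl (hψ l.1 (h.trans (map_one _).symm))
  chain_ne := (List.isChain_map _).mpr w.chain_ne

theorem Word.prod_map (ψ : ∀ i, M i →* M i) (hψ : ∀ i, Function.Injective (ψ i))
    (w : Word M) : (w.map ψ hψ).prod = lift (fun i => of.comp (ψ i)) w.prod := by
  simp only [Word.prod, Word.map, List.map_map, map_list_prod]
  rfl

theorem Word.letter_fixed_of_lift_fixed [DecidableEq ι] [∀ i, DecidableEq (M i)]
    (ψ : ∀ i, M i →* M i) (hψ : ∀ i, Function.Injective (ψ i)) {x : CoprodI M}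
    (hx : lift (fun i => of.comp (ψ i)) x = x) :
    ∀ l ∈ (Word.equiv x).toList, ψ l.1 l.2 = l.2 := by
  have hmap : (Word.equiv x).map ψ hψ = Word.equiv x := by
    apply Word.equiv.symm.injective
    change ((Word.equiv x).map ψ hψ).prod = (Word.equiv x).prod
    rw [Word.prod_map, show (Word.equiv x).prod = x from Word.equiv.symm_apply_apply x, hx]
  intro l hl
  have hl' := List.map_inj_left.mp ((congrArg Word.toList hmap).trans (List.map_id _).symm) l hl
  exact eq_of_heq (Sigma.mk.inj_iff.mp hl').2

theorem mem_range_of_of_lift_fixed (ψ : ∀ i, M i →* M i) (hψ : ∀ i, Function.Injective (ψ i))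
    (j : ι) (hfree : ∀ i ≠ j, ∀ m : M i, ψ i m = m → m = 1) {x : CoprodI M}
    (hx : lift (fun i => of.comp (ψ i)) x = x) : x ∈ Set.range (of (i := j)) := by
  classical
  set w := Word.equiv x
  have hidx : ∀ l ∈ w.toList, l.1 = j := fun l hl => by_contra fun hne =>
    w.ne_one l hl (hfree l.1 hne l.2 (Word.letter_fixed_of_lift_fixed ψ hψ hx l hl))
  have hprod : w.prod = x := Word.equiv.symm_apply_apply x
  rcases hw : w.toList with _ | ⟨⟨i, m⟩, _ | ⟨l, t⟩⟩
  · exact ⟨1, by simp [← hprod, Word.prod, hw]⟩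
  · obtain rfl : i = j := hidx ⟨i, m⟩ (by simp [hw])
    exact ⟨m, by simp [← hprod, Word.prod, hw]⟩
  · have hchain := w.chain_ne
    rw [hw, List.isChain_cons_cons] at hchain
    exact absurd ((hidx ⟨i, m⟩ (by simp [hw])).trans (hidx l (by simp [hw])).symm) hchain.1

end Monoid.CoprodI

namespace Monoid.Coprod

universe u v

variable {M : Type u} {N : Type v} [Monoid M] [Monoid N]

/-- `M ∗ N` as Mathlib's indexed free product `CoprodI`, which has reduced words; the `ULift`s
put both factors into one universe. -/
def summands (M : Type u) (N : Type v) : Bool → Type (max u v)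
  | true => ULift M
  | false => ULift N

instance : ∀ b, Monoid (summands M N b)
  | true => inferInstanceAs (Monoid (ULift M))
  | false => inferInstanceAs (Monoid (ULift N))

def toCoprodI : M ∗ N →* CoprodI (summands M N) :=
  lift (CoprodI.of (i := true) |>.comp MulEquiv.ulift.symm.toMonoidHom)
    (CoprodI.of (i := false) |>.comp MulEquiv.ulift.symm.toMonoidHom)

def ofCoprodI : CoprodI (summands M N) →* M ∗ N :=
  CoprodI.lift fun
    | true => inl.comp MulEquiv.ulift.toMonoidHom
    | false => inr.comp MulEquiv.ulift.toMonoidHom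

theorem ofCoprodI_comp_toCoprodI :
    (ofCoprodI.comp toCoprodI : M ∗ N →* M ∗ N) = MonoidHom.id _ :=
  hom_ext rfl rfl

theorem toCoprodI_injective : Function.Injective (toCoprodI : M ∗ N →* _) :=
  Function.LeftInverse.injective (g := ofCoprodI) (DFunLike.congr_fun ofCoprodI_comp_toCoprodI)

def summandsMap (f : M →* M) (g : N →* N) : ∀ b, summands M N b →* summands M N b
  | true => MulEquiv.ulift.symm.toMonoidHom.comp (f.comp MulEquiv.ulift.toMonoidHom)
  | false => MulEquiv.ulift.symm.toMonoidHom.comp (g.comp MulEquiv.ulift.toMonoidHom)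

theorem toCoprodI_comp_map (f : M →* M) (g : N →* N) :
    toCoprodI.comp (map f g) =
      (CoprodI.lift fun b => CoprodI.of.comp (summandsMap f g b)).comp toCoprodI :=
  hom_ext rfl rfl

theorem mem_range_inr_of_map_fixed {f : M →* M} {g : N →* N} (hf : Function.Injective f)
    (hg : Function.Injective g) (hfree : ∀ m, f m = m → m = 1) {x : M ∗ N}
    (hx : map f g x = x) : x ∈ Set.range (inr : N →* M ∗ N) := by
  have hinj : ∀ b, Function.Injective (summandsMap f g b)
    | true => fun a₁ a₂ h => ULift.ext _ _ (hf (congrArg ULift.down h))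
    | false => fun a₁ a₂ h => ULift.ext _ _ (hg (congrArg ULift.down h))
  have hfix := DFunLike.congr_fun (toCoprodI_comp_map f g) x
  rw [MonoidHom.comp_apply, hx] at hfix
  obtain ⟨n, hn⟩ := CoprodI.mem_range_of_of_lift_fixed _ hinj false
    (fun | true, _, m, hm => ULift.ext _ _ (hfree m.down (congrArg ULift.down hm))) hfix.symm
  exact ⟨n.down, toCoprodI_injective hn⟩

end Monoid.Coprod

/-- identification used in the proof of Theorem 3.4. Let `φ` be an
automorphism of `G₁` with no nontrivial fixed points, and let `Φ` be the endomorphism of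
the free product `G₁ ∗ G₂` induced by `φ` on the first factor and the identity on the
second factor. Then the fixed-point set of `Φ` is exactly the image of the canonical
embedding `inr : G₂ → G₁ ∗ G₂`. -/
theorem free_joinings_stmt13
    {G₁ G₂ : Type*} [Group G₁] [Group G₂] (φ : G₁ ≃* G₁)
    (hφ : ∀ g : G₁, g ≠ 1 → φ g ≠ g)
    (Φ : Coprod G₁ G₂ →* Coprod G₁ G₂)
    (hl : ∀ g : G₁, Φ (Coprod.inl g) = Coprod.inl (φ g))
    (hr : ∀ g : G₂, Φ (Coprod.inr g) = Coprod.inr g) :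
    {x : Coprod G₁ G₂ | Φ x = x} =
      Set.range (Coprod.inr : G₂ →* Coprod G₁ G₂) := by
  have hΦ : Φ = Coprod.map φ.toMonoidHom (MonoidHom.id G₂) :=
    Coprod.hom_ext (MonoidHom.ext hl) (MonoidHom.ext hr)
  refine Set.Subset.antisymm (fun x hx => ?_) (Set.range_subset_iff.mpr hr)
  exact Coprod.mem_range_inr_of_map_fixed φ.injective Function.injective_id
    (fun g hg => by_contra fun hg₁ => hφ g hg₁ hg) (hΦ ▸ hx)
end
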